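/- For all ν₁,ν₂,τ₁,τ₂∈ℤ[I], every homogeneous x∈'𝔣⁺ and every homogeneous y∈'𝔣⁻, one has φ(K_{ν₁}xJ_{ν₂}, K'_{τ₁}yJ'_{τ₂}) = ⟨ν₁,τ₁⟩·⟨ν₁,|y|⟩·⟨|x|,τ₁⟩·ξ(τ₁,ν₂)·φ(x,y). -/

import Mathlib

open scoped TensorProduct

noncomputable section

/-- A Cartan datum on `I`. -/
structure CartanDatum (I : Type) where
  c : I → I → ℤ
  symm : ∀ i j, c i j = c j i
  pos : ∀ i, 0 < c i i
  even : ∀ i, Even (c i i)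
  dvd : ∀ i j, i ≠ j → c i i ∣ 2 * c i j
  nonpos : ∀ i j, i ≠ j → 2 * c i j ≤ 0

namespace CartanDatum

variable {I : Type} (cd : CartanDatum I)

/-- `d i = (i·i)/2`. -/
def d (i : I) : ℤ := cd.c i i / 2

/-- `a i j = 2(i·j)/(i·i)`. -/
def a (i j : I) : ℤ := 2 * cd.c i j / cd.c i i

/-- Extension of the pairing to `ℕ[I] × ℕ[I]`. -/
def dotN (ν μ : I →₀ ℕ) : ℤ :=
  ν.sum fun i m => μ.sum fun j n => (m : ℤ) * (n : ℤ) * cd.c i j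

end CartanDatum

/-- A multiplicative bilinear form `ℕ[I] × ℕ[I] → 𝔽`. -/
structure MultForm (I 𝔽 : Type) [Field 𝔽] where
  f : (I →₀ ℕ) → (I →₀ ℕ) → 𝔽
  add_left : ∀ ν ν' μ, f (ν + ν') μ = f ν μ * f ν' μ
  add_right : ∀ μ ν ν', f μ (ν + ν') = f μ ν * f μ ν'
  ne_zero : ∀ ν μ, f ν μ ≠ 0

/-- The trivial multiplicative bilinear form, constantly `1`. -/
def trivMF (I 𝔽 : Type) [Field 𝔽] : MultForm I 𝔽 :=
  ⟨fun _ _ => 1, fun _ _ _ => by ring, fun _ _ _ => by ring, fun _ _ => one_ne_zero⟩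

variable {I : Type}

/-- The generator `i` of `ℕ[I]`. -/
def δN (i : I) : I →₀ ℕ := Finsupp.single i 1

/-- The model for the free algebra `'𝔣` on the `θ i`. -/
abbrev FA (𝔽 I : Type) [Field 𝔽] := MonoidAlgebra 𝔽 (FreeMonoid I)

/-- The generator `θ i` of `'𝔣`. -/
def θ (𝔽 : Type) [Field 𝔽] {I : Type} (i : I) : FA 𝔽 I :=
  MonoidAlgebra.of 𝔽 (FreeMonoid I) (FreeMonoid.of i)

/-- The `ℕ[I]`-degree of a word. -/
def wt [DecidableEq I] (w : FreeMonoid I) : I →₀ ℕ :=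
  Multiset.toFinsupp (↑(FreeMonoid.toList w))

/-- Homogeneity of degree `ν` in `'𝔣`. -/
def IsHomog {𝔽 : Type} [Field 𝔽] [DecidableEq I] (ν : I →₀ ℕ) (x : FA 𝔽 I) : Prop :=
  ∀ w ∈ Finsupp.support (x.coeff : FreeMonoid I →₀ 𝔽), wt w = ν

/-- The model for `'𝔣 ⊗ '𝔣` (basis: pairs of words). -/
abbrev TA (𝔽 I : Type) [Field 𝔽] := MonoidAlgebra 𝔽 (FreeMonoid I × FreeMonoid I)

/-- The tensor `x ⊗ y` in the model of `'𝔣 ⊗ '𝔣`. -/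
def tmul {𝔽 : Type} [Field 𝔽] (x y : FA 𝔽 I) : TA 𝔽 I :=
  Finsupp.sum (x.coeff : FreeMonoid I →₀ 𝔽) fun w a =>
    Finsupp.sum (y.coeff : FreeMonoid I →₀ 𝔽) fun u b =>
      MonoidAlgebra.ofCoeff (Finsupp.single (w, u) (a * b) : (FreeMonoid I × FreeMonoid I) →₀ 𝔽)

/-- The twisted multiplication on `'𝔣 ⊗ '𝔣`:
`(x₁⊗x₂)(y₁⊗y₂) = v^{-|y₁|·|x₂|} β(|x₂|,|y₁|) x₁y₁ ⊗ x₂y₂`. -/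
def tMul [DecidableEq I] {𝔽 : Type} [Field 𝔽] (cd : CartanDatum I) (v : 𝔽)
    (β : MultForm I 𝔽) (z z' : TA 𝔽 I) : TA 𝔽 I :=
  Finsupp.sum (z.coeff : (FreeMonoid I × FreeMonoid I) →₀ 𝔽) fun p a =>
    Finsupp.sum (z'.coeff : (FreeMonoid I × FreeMonoid I) →₀ 𝔽) fun q b =>
      MonoidAlgebra.ofCoeff (Finsupp.single (p.1 * q.1, p.2 * q.2)
        (a * b * v ^ (-(cd.dotN (wt q.1) (wt p.2))) * β.f (wt p.2) (wt q.1))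
        : (FreeMonoid I × FreeMonoid I) →₀ 𝔽)

/-- The bilinear form on `'𝔣 ⊗ '𝔣` induced by a form `B` on `'𝔣`:
`(x₁⊗x₂, y₁⊗y₂) = α(|x₁|,|x₂|) (x₁,y₁) (x₂,y₂)` for homogeneous `x₁, x₂`. -/
def pairT [DecidableEq I] {𝔽 : Type} [Field 𝔽] (α : MultForm I 𝔽)
    (B : FA 𝔽 I →ₗ[𝔽] FA 𝔽 I →ₗ[𝔽] 𝔽) (z z' : TA 𝔽 I) : 𝔽 :=
  Finsupp.sum (z.coeff : (FreeMonoid I × FreeMonoid I) →₀ 𝔽) fun p a =>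
    Finsupp.sum (z'.coeff : (FreeMonoid I × FreeMonoid I) →₀ 𝔽) fun q b =>
      a * b * α.f (wt p.1) (wt p.2)
        * B (MonoidAlgebra.single p.1 1) (MonoidAlgebra.single q.1 1)
        * B (MonoidAlgebra.single p.2 1) (MonoidAlgebra.single q.2 1)

/-- The quantum integer `[n]_c`. -/
def qnum {𝔽 : Type} [Field 𝔽] (c : 𝔽) (n : ℕ) : 𝔽 :=
  (c ^ (n : ℤ) - c ^ (-(n : ℤ))) / (c - c⁻¹)

/-- The quantum factorial `[n]_c!`. -/
def qfact {𝔽 : Type} [Field 𝔽] (c : 𝔽) (n : ℕ) : 𝔽 :=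
  ∏ k ∈ Finset.range n, qnum c (k + 1)

/-- The divided power `θ_i^{(n)} = θ_i^n / [n]_{v_i}!`. -/
def θdiv [DecidableEq I] {𝔽 : Type} [Field 𝔽] (cd : CartanDatum I) (v : 𝔽)
    (i : I) (n : ℕ) : FA 𝔽 I :=
  (qfact (v ^ cd.d i) n)⁻¹ • (θ 𝔽 i) ^ n

/-- The twisted quantum Serre element
`D_{ij} = Σ_{k+k'=1-a_{ij}} (-1)^k β(i,j)^{-k} θ_i^{(k)} θ_j θ_i^{(k')}`. -/
def Dij [DecidableEq I] {𝔽 : Type} [Field 𝔽] (cd : CartanDatum I) (v : 𝔽)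
    (g : I → I → 𝔽) (i j : I) : FA 𝔽 I :=
  ∑ k ∈ Finset.range ((1 - cd.a i j).toNat + 1),
    ((-1 : 𝔽) ^ k * ((g i j)⁻¹) ^ k) •
      (θdiv cd v i k * θ 𝔽 j * θdiv cd v i ((1 - cd.a i j).toNat - k))

end
noncomputable section

variable {I : Type}

/-- The generator `i` of `ℤ[I]`. -/
def δZ (i : I) : I →₀ ℤ := Finsupp.single i 1

/-- The inclusion `ℕ[I] → ℤ[I]`. -/
def nz (ν : I →₀ ℕ) : I →₀ ℤ := Finsupp.mapRange (fun n : ℕ => (n : ℤ)) rfl ν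

/-- The multiplicative extension to `ℤ[I] × ℤ[I]` of generator values `g : I → I → 𝔽`. -/
def extZ {𝔽 : Type} [Field 𝔽] (g : I → I → 𝔽) (ν μ : I →₀ ℤ) : 𝔽 :=
  ν.prod fun i m => μ.prod fun j n => g i j ^ (m * n)

/-- The form `⟨i,j⟩ = v^{-i·j} β(i,j) ξ(j,i)`, extended multiplicatively to `ℤ[I]`. -/
def ang {𝔽 : Type} [Field 𝔽] (cd : CartanDatum I) (v : 𝔽) (βg ξg : I → I → 𝔽) :
    (I →₀ ℤ) → (I →₀ ℤ) → 𝔽 :=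
  extZ fun i j => v ^ (-(cd.c i j)) * βg i j * ξg j i

/-- The monomial in `F : I → A` associated with a word `w`. -/
def wordProd {A : Type} [Monoid A] (F : I → A) (w : FreeMonoid I) : A :=
  ((FreeMonoid.toList w).map F).prod

/-- `x` is homogeneous of degree `μ` in the subalgebra generated by the image of `F`. -/
def HomogIn (𝔽 : Type) [Field 𝔽] [DecidableEq I] {A : Type} [Ring A] [Algebra 𝔽 A]
    (F : I → A) (μ : I →₀ ℕ) (x : A) : Prop :=
  x ∈ Submodule.span 𝔽 {z | ∃ w, wt w = μ ∧ z = wordProd F w}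

end

/-!
Since `ρ⁺` is an anti-homomorphism, `ρ⁺(K_{ν₁} x J_{ν₂}) = ρ⁺(J_{ν₂}) ρ⁺(x) ρ⁺(K_{ν₁})`.
On `K'_{τ₁} y J'_{τ₂}` the operator `ρ⁺(K_{ν₁})` is the scalar `⟨ν₁,τ₁⟩⟨ν₁,|y|⟩`. As `ⱼ𝒮` kills
the toral elements while `𝒦_j` and `𝒥_j` scale `K'_τ` and `J'_τ` by `⟨j,τ⟩` and `1`, the twisted
Leibniz rule gives `ⱼ𝒮(K'_{τ₁} z J'_{τ₂}) = ⟨j,τ₁⟩ K'_{τ₁} ⱼ𝒮(z) J'_{τ₂}`, so moving `ρ⁺(x)` past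
`K'_{τ₁}` costs `⟨|x|,τ₁⟩`. Finally `ρ⁺(x) y` lies in `'𝔣⁻`, on which `ρ⁺(J_{ν₂})` scales
`K'_{τ₁} w J'_{τ₂}` by `ξ(τ₁,ν₂) ξ(|w|,ν₂)`, and the counit kills every nonempty word `w`.
-/

section Words

variable {I : Type}

theorem wordProd_of_mul {A : Type} [Monoid A] (F : I → A) (i : I) (w : FreeMonoid I) :
    wordProd F (FreeMonoid.of i * w) = F i * wordProd F w := by
  simp [wordProd]

theorem wordProd_of {A : Type} [Monoid A] (F : I → A) (i : I) :
    wordProd F (FreeMonoid.of i) = F i := by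
  simp [wordProd]

theorem wordProd_mul {A : Type} [Monoid A] (F : I → A) (w u : FreeMonoid I) :
    wordProd F (w * u) = wordProd F w * wordProd F u := by
  simp [wordProd, FreeMonoid.toList_mul]

def wordSpan (𝔽 : Type) [Field 𝔽] {A : Type} [Ring A] [Algebra 𝔽 A] (F : I → A) :
    Submodule 𝔽 A :=
  Submodule.span 𝔽 (Set.range (wordProd F))

theorem wordProd_mul_mem_wordSpan {𝔽 A : Type} [Field 𝔽] [Ring A] [Algebra 𝔽 A] {F : I → A}
    (w : FreeMonoid I) {z : A} (hz : z ∈ wordSpan 𝔽 F) : wordProd F w * z ∈ wordSpan 𝔽 F := by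
  refine (Submodule.span_le (p := (wordSpan 𝔽 F).comap (LinearMap.mulLeft 𝔽 (wordProd F w)))).mpr
    ?_ hz
  rintro _ ⟨u, rfl⟩
  exact Submodule.subset_span ⟨w * u, wordProd_mul F w u⟩

variable [DecidableEq I]

theorem HomogIn.mem_wordSpan {𝔽 A : Type} [Field 𝔽] [Ring A] [Algebra 𝔽 A] {F : I → A}
    {μ : I →₀ ℕ} {y : A} (hy : HomogIn 𝔽 F μ y) : y ∈ wordSpan 𝔽 F :=
  Submodule.span_mono (by rintro _ ⟨w, -, rfl⟩; exact ⟨w, rfl⟩) hy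

theorem nz_wt_one : nz (wt (1 : FreeMonoid I)) = 0 := by
  ext i; simp [nz, wt]

theorem nz_wt_of_mul (i : I) (w : FreeMonoid I) :
    nz (wt (FreeMonoid.of i * w)) = δZ i + nz (wt w) := by
  ext k
  by_cases h : i = k <;> simp [nz, wt, δZ, h, add_comm]

end Words

section MultiplicativeForms

variable {I 𝔽 : Type} [Field 𝔽]

@[simp]
theorem extZ_zero_left (g : I → I → 𝔽) (μ : I →₀ ℤ) : extZ g 0 μ = 1 :=
  Finsupp.prod_zero_index

@[simp]
theorem extZ_zero_right (g : I → I → 𝔽) (ν : I →₀ ℤ) : extZ g ν 0 = 1 := by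
  simp [extZ, Finsupp.prod]

theorem extZ_add_left {g : I → I → 𝔽} (hg : ∀ i j, g i j ≠ 0) (ν ν' μ : I →₀ ℤ) :
    extZ g (ν + ν') μ = extZ g ν μ * extZ g ν' μ := by
  refine Finsupp.prod_add_index' (fun i => by simp [Finsupp.prod]) fun i m m' => ?_
  rw [← Finsupp.prod_mul]
  exact Finsupp.prod_congr fun j _ => by rw [add_mul, zpow_add₀ (hg i j)]

theorem extZ_add_right {g : I → I → 𝔽} (hg : ∀ i j, g i j ≠ 0) (ν μ μ' : I →₀ ℤ) :
    extZ g ν (μ + μ') = extZ g ν μ * extZ g ν μ' := by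
  rw [extZ, extZ, extZ, ← Finsupp.prod_mul]
  refine Finsupp.prod_congr fun i _ => Finsupp.prod_add_index' (by simp) fun j n n' => ?_
  rw [mul_add, zpow_add₀ (hg i j)]

theorem ang_add_left (cd : CartanDatum I) {v : 𝔽} (hv : v ≠ 0) {βg ξg : I → I → 𝔽}
    (hβ : ∀ i j, βg i j ≠ 0) (hξ : ∀ i j, ξg i j ≠ 0) (ν ν' μ : I →₀ ℤ) :
    ang cd v βg ξg (ν + ν') μ = ang cd v βg ξg ν μ * ang cd v βg ξg ν' μ :=
  extZ_add_left (fun i j => mul_ne_zero (mul_ne_zero (zpow_ne_zero _ hv) (hβ i j)) (hξ j i)) _ _ _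

end MultiplicativeForms

section AntiRepresentations

variable {I 𝔽 : Type} [Field 𝔽] {A M : Type} [Ring A] [Algebra 𝔽 A] [AddCommGroup M] [Module 𝔽 M]
  {ρ : A →ₗ[𝔽] Module.End 𝔽 M}

theorem apply_eq_smul_of_generators (hρanti : ∀ x y, ρ (x * y) = ρ y * ρ x) (hρ1 : ρ 1 = 1)
    {G : (I →₀ ℤ) → A} (hG0 : G 0 = 1) (hGadd : ∀ a b, G (a + b) = G a * G b)
    {s : (I →₀ ℤ) → 𝔽} (hs0 : s 0 = 1) (hsadd : ∀ a b, s (a + b) = s a * s b) {z : M}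
    (hgen : ∀ i, ρ (G (δZ i)) z = s (δZ i) • z) (hgen' : ∀ i, ρ (G (-δZ i)) z = s (-δZ i) • z)
    (ν : I →₀ ℤ) : ρ (G ν) z = s ν • z := by
  have hzero : ρ (G 0) z = s 0 • z := by rw [hG0, hρ1, hs0, one_smul, Module.End.one_apply]
  have hadd : ∀ a b, ρ (G a) z = s a • z → ρ (G b) z = s b • z →
      ρ (G (a + b)) z = s (a + b) • z := fun a b ha hb => by
    rw [hGadd, hρanti, Module.End.mul_apply, ha, map_smul, hb, hsadd, smul_smul]
  have hsingle : ∀ (i : I) (m : ℤ), ρ (G (Finsupp.single i m)) z = s (Finsupp.single i m) • z := by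
    intro i m
    induction m using Int.induction_on with
    | zero => simpa using hzero
    | succ n ih =>
      rw [Finsupp.single_add]
      exact hadd _ _ ih (hgen i)
    | pred n ih =>
      rw [sub_eq_add_neg, Finsupp.single_add]
      exact hadd _ _ ih (by simpa [δZ] using hgen' i)
  induction ν using Finsupp.induction with
  | zero => exact hzero
  | single_add i m f _ _ ih => exact hadd _ _ (hsingle i m) ih

theorem mul_eq_smul_mul_of_homogIn [DecidableEq I] (hρanti : ∀ x y, ρ (x * y) = ρ y * ρ x)
    (hρ1 : ρ 1 = 1) {E : I → A} {L : Module.End 𝔽 M}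
    {χ : (I →₀ ℤ) → 𝔽} (hχ0 : χ 0 = 1) (hχadd : ∀ a b, χ (a + b) = χ a * χ b)
    (hE : ∀ j, ρ (E j) * L = χ (δZ j) • (L * ρ (E j))) {μ : I →₀ ℕ} {x : A}
    (hx : HomogIn 𝔽 E μ x) : ρ x * L = χ (nz μ) • (L * ρ x) := by
  have hword : ∀ w, ρ (wordProd E w) * L = χ (nz (wt w)) • (L * ρ (wordProd E w)) := by
    intro w
    induction w using FreeMonoid.recOn with
    | one => simp [nz_wt_one, hχ0, wordProd, hρ1]
    | of_mul j w ih =>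
      rw [wordProd_of_mul, hρanti, mul_assoc, hE, mul_smul_comm, ← mul_assoc, ih, nz_wt_of_mul,
        hχadd, smul_mul_assoc, smul_smul, mul_assoc, mul_comm (χ _)]
  refine LinearMap.eqOn_span' (f := LinearMap.mulRight 𝔽 L ∘ₗ ρ)
    (g := χ (nz μ) • (LinearMap.mulLeft 𝔽 L ∘ₗ ρ)) ?_ hx
  rintro _ ⟨w, rfl, rfl⟩
  exact hword w

theorem le_comap_of_mem_wordSpan (hρanti : ∀ x y, ρ (x * y) = ρ y * ρ x) (hρ1 : ρ 1 = 1)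
    {E : I → A} {N : Submodule 𝔽 M} (hE : ∀ j, N ≤ N.comap (ρ (E j))) {x : A}
    (hx : x ∈ wordSpan 𝔽 E) : N ≤ N.comap (ρ x) := by
  refine (Submodule.span_le (p := (Submodule.compatibleMaps N N).comap ρ)).mpr ?_ hx
  rintro _ ⟨w, rfl⟩
  induction w using FreeMonoid.recOn with
  | one => exact fun z hz => by simpa [wordProd, hρ1] using hz
  | of_mul j w ih =>
    rw [wordProd_of_mul]
    intro z hz
    rw [hρanti]
    exact ih (hE j hz)

end AntiRepresentations

section TwistedDerivations

variable {𝔽 A : Type} [Field 𝔽] [Ring A] [Algebra 𝔽 A] {D σ₁ σ₂ : A →ₗ[𝔽] A}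

theorem twistedDerivation_mul_left (hD : ∀ x y, D (x * y) = D x * σ₂ y + σ₁ x * D y)
    {a : A} {c : 𝔽} (hDa : D a = 0) (hσa : σ₁ a = c • a) (z : A) :
    D (a * z) = c • (a * D z) := by
  rw [hD, hDa, zero_mul, zero_add, hσa, smul_mul_assoc]

theorem twistedDerivation_mul_right (hD : ∀ x y, D (x * y) = D x * σ₂ y + σ₁ x * D y)
    {b : A} (hDb : D b = 0) (hσb : σ₂ b = b) (z : A) :
    D (z * b) = D z * b := by
  rw [hD, hDb, mul_zero, add_zero, hσb]

end TwistedDerivations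

section NegativeHalf

variable {I 𝔽 Am : Type} [DecidableEq I] [Field 𝔽] [Ring Am] [Algebra 𝔽 Am]
  {cd : CartanDatum I} {v : 𝔽} {βg ξg : I → I → 𝔽} {F : I → Am} {K' J' : (I →₀ ℤ) → Am}
  {cK cJ : (I →₀ ℤ) → (Am →ₗ[𝔽] Am)} {iS : I → (Am →ₗ[𝔽] Am)}

theorem cK_apply_wordProd (hK'0 : K' 0 = 1) (hJ'0 : J' 0 = 1)
    (hcK : ∀ (ν τ₁ τ₂ : I →₀ ℤ) (w : FreeMonoid I),
      cK ν (K' τ₁ * wordProd F w * J' τ₂)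
        = (ang cd v βg ξg ν τ₁ * ang cd v βg ξg ν (nz (wt w))) • (K' τ₁ * wordProd F w * J' τ₂))
    (ν : I →₀ ℤ) (w : FreeMonoid I) :
    cK ν (wordProd F w) = ang cd v βg ξg ν (nz (wt w)) • wordProd F w := by
  simpa [hK'0, hJ'0, ang] using hcK ν 0 0 w

theorem cJ_apply_wordProd (hK'0 : K' 0 = 1) (hJ'0 : J' 0 = 1)
    (hcJ : ∀ (ν τ₁ τ₂ : I →₀ ℤ) (w : FreeMonoid I),
      cJ ν (K' τ₁ * wordProd F w * J' τ₂)
        = (extZ ξg τ₁ ν * extZ ξg (nz (wt w)) ν) • (K' τ₁ * wordProd F w * J' τ₂))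
    (ν : I →₀ ℤ) (w : FreeMonoid I) :
    cJ ν (wordProd F w) = extZ ξg (nz (wt w)) ν • wordProd F w := by
  simpa [hK'0, hJ'0] using hcJ ν 0 0 w

theorem iS_K'_mul_mul_J' (hK'0 : K' 0 = 1) (hJ'0 : J' 0 = 1)
    (hcK : ∀ (ν τ₁ τ₂ : I →₀ ℤ) (w : FreeMonoid I),
      cK ν (K' τ₁ * wordProd F w * J' τ₂)
        = (ang cd v βg ξg ν τ₁ * ang cd v βg ξg ν (nz (wt w))) • (K' τ₁ * wordProd F w * J' τ₂))
    (hcJ : ∀ (ν τ₁ τ₂ : I →₀ ℤ) (w : FreeMonoid I),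
      cJ ν (K' τ₁ * wordProd F w * J' τ₂)
        = (extZ ξg τ₁ ν * extZ ξg (nz (wt w)) ν) • (K' τ₁ * wordProd F w * J' τ₂))
    (hiS0 : ∀ (j : I) (τ₁ τ₂ : I →₀ ℤ), iS j (K' τ₁ * J' τ₂) = 0)
    (hiSmul : ∀ (j : I) (x y : Am), iS j (x * y) = iS j x * cJ (δZ j) y + cK (δZ j) x * iS j y)
    (j : I) (τ₁ τ₂ : I →₀ ℤ) (z : Am) :
    iS j (K' τ₁ * z * J' τ₂) = ang cd v βg ξg (δZ j) τ₁ • (K' τ₁ * iS j z * J' τ₂) := by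
  have hcKK' : cK (δZ j) (K' τ₁) = ang cd v βg ξg (δZ j) τ₁ • K' τ₁ := by
    simpa [hJ'0, wordProd, nz_wt_one, ang] using hcK (δZ j) τ₁ 0 1
  have hcJJ' : cJ (δZ j) (J' τ₂) = J' τ₂ := by
    simpa [hK'0, wordProd, nz_wt_one] using hcJ (δZ j) 0 τ₂ 1
  rw [twistedDerivation_mul_right (hiSmul j) (by simpa [hK'0] using hiS0 j 0 τ₂) hcJJ',
    twistedDerivation_mul_left (hiSmul j) (by simpa [hJ'0] using hiS0 j τ₁ 0) hcKK',
    smul_mul_assoc]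

theorem wordSpan_le_comap_iS (hK'0 : K' 0 = 1) (hJ'0 : J' 0 = 1)
    (hcK : ∀ (ν τ₁ τ₂ : I →₀ ℤ) (w : FreeMonoid I),
      cK ν (K' τ₁ * wordProd F w * J' τ₂)
        = (ang cd v βg ξg ν τ₁ * ang cd v βg ξg ν (nz (wt w))) • (K' τ₁ * wordProd F w * J' τ₂))
    (hcJ : ∀ (ν τ₁ τ₂ : I →₀ ℤ) (w : FreeMonoid I),
      cJ ν (K' τ₁ * wordProd F w * J' τ₂)
        = (extZ ξg τ₁ ν * extZ ξg (nz (wt w)) ν) • (K' τ₁ * wordProd F w * J' τ₂))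
    (hiS0 : ∀ (j : I) (τ₁ τ₂ : I →₀ ℤ), iS j (K' τ₁ * J' τ₂) = 0)
    (hiSF : ∀ j i : I, iS j (F i) = if i = j then ξg i j • (1 : Am) else 0)
    (hiSmul : ∀ (j : I) (x y : Am), iS j (x * y) = iS j x * cJ (δZ j) y + cK (δZ j) x * iS j y)
    (j : I) : wordSpan 𝔽 F ≤ (wordSpan 𝔽 F).comap (iS j) := by
  refine Submodule.span_le.mpr ?_
  rintro _ ⟨w, rfl⟩
  induction w using FreeMonoid.recOn with
  | one => simpa [wordProd, hK'0, hJ'0] using congrArg (· ∈ wordSpan 𝔽 F) (hiS0 j 0 0)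
  | of_mul i w ih =>
    have hword : wordProd F w ∈ wordSpan 𝔽 F := Submodule.subset_span ⟨w, rfl⟩
    rw [SetLike.mem_coe, Submodule.mem_comap, wordProd_of_mul, hiSmul, hiSF,
      cJ_apply_wordProd hK'0 hJ'0 hcJ, ← wordProd_of F i, cK_apply_wordProd hK'0 hJ'0 hcK,
      smul_mul_assoc]
    refine add_mem ?_ (Submodule.smul_mem _ _ (wordProd_mul_mem_wordSpan _ ih))
    split_ifs
    · simpa [smul_smul] using Submodule.smul_mem _ _ hword
    · simp

end NegativeHalf

section Pairing

variable {I 𝔽 Ap Am : Type} [DecidableEq I] [Field 𝔽] [Ring Ap] [Algebra 𝔽 Ap] [Ring Am]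
  [Algebra 𝔽 Am] {cd : CartanDatum I} {v : 𝔽} {βg ξg : I → I → 𝔽} {F : I → Am}
  {K' J' : (I →₀ ℤ) → Am} {cK cJ : (I →₀ ℤ) → (Am →ₗ[𝔽] Am)} {ρ : Ap →ₗ[𝔽] Module.End 𝔽 Am}

theorem rho_apply_K'_mul_mul_J'_of_homogIn (hv : v ≠ 0) (hβ : ∀ i j, βg i j ≠ 0)
    (hξ : ∀ i j, ξg i j ≠ 0) (hρanti : ∀ x y : Ap, ρ (x * y) = ρ y * ρ x) (hρ1 : ρ 1 = 1)
    {K : (I →₀ ℤ) → Ap} (hK0 : K 0 = 1) (hKadd : ∀ a b, K (a + b) = K a * K b)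
    (hcK : ∀ (ν τ₁ τ₂ : I →₀ ℤ) (w : FreeMonoid I),
      cK ν (K' τ₁ * wordProd F w * J' τ₂)
        = (ang cd v βg ξg ν τ₁ * ang cd v βg ξg ν (nz (wt w))) • (K' τ₁ * wordProd F w * J' τ₂))
    (hρK : ∀ i : I, ρ (K (δZ i)) = cK (δZ i)) (hρKinv : ∀ i : I, ρ (K (-(δZ i))) = cK (-(δZ i)))
    (ν τ₁ τ₂ : I →₀ ℤ) {μ : I →₀ ℕ} {y : Am} (hy : HomogIn 𝔽 F μ y) :
    ρ (K ν) (K' τ₁ * y * J' τ₂)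
      = (ang cd v βg ξg ν τ₁ * ang cd v βg ξg ν (nz μ)) • (K' τ₁ * y * J' τ₂) := by
  refine LinearMap.eqOn_span' (f := ρ (K ν) ∘ₗ LinearMap.mulLeftRight 𝔽 (K' τ₁, J' τ₂))
    (g := (ang cd v βg ξg ν τ₁ * ang cd v βg ξg ν (nz μ)) •
      LinearMap.mulLeftRight 𝔽 (K' τ₁, J' τ₂)) ?_ hy
  rintro _ ⟨w, hw, rfl⟩
  refine apply_eq_smul_of_generators (z := K' τ₁ * wordProd F w * J' τ₂)
    (s := fun ν => ang cd v βg ξg ν τ₁ * ang cd v βg ξg ν (nz μ)) hρanti hρ1 hK0 hKadd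
    (by simp [ang]) (fun a b => ?_) (fun i => by rw [hρK, hcK, hw])
    (fun i => by rw [hρKinv, hcK, hw]) ν
  simp only [ang_add_left cd hv hβ hξ]
  ring

theorem counit_rho_apply_K'_mul_mul_J' (hξ : ∀ i j, ξg i j ≠ 0)
    (hρanti : ∀ x y : Ap, ρ (x * y) = ρ y * ρ x) (hρ1 : ρ 1 = 1)
    {Jp : (I →₀ ℤ) → Ap} (hJ0 : Jp 0 = 1) (hJadd : ∀ a b, Jp (a + b) = Jp a * Jp b)
    (hcJ : ∀ (ν τ₁ τ₂ : I →₀ ℤ) (w : FreeMonoid I),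
      cJ ν (K' τ₁ * wordProd F w * J' τ₂)
        = (extZ ξg τ₁ ν * extZ ξg (nz (wt w)) ν) • (K' τ₁ * wordProd F w * J' τ₂))
    (hρJ : ∀ i : I, ρ (Jp (δZ i)) = cJ (δZ i))
    (hρJinv : ∀ i : I, ρ (Jp (-(δZ i))) = cJ (-(δZ i)))
    {εm : Am →ₐ[𝔽] 𝔽} (hεmF : ∀ i, εm (F i) = 0) (hεmK' : ∀ ν, εm (K' ν) = 1)
    (hεmJ' : ∀ ν, εm (J' ν) = 1) (ν τ₁ τ₂ : I →₀ ℤ) {u : Am} (hu : u ∈ wordSpan 𝔽 F) :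
    εm (ρ (Jp ν) (K' τ₁ * u * J' τ₂)) = extZ ξg τ₁ ν * εm u := by
  refine LinearMap.eqOn_span'
    (f := εm.toLinearMap ∘ₗ ρ (Jp ν) ∘ₗ LinearMap.mulLeftRight 𝔽 (K' τ₁, J' τ₂))
    (g := extZ ξg τ₁ ν • εm.toLinearMap) ?_ hu
  rintro _ ⟨w, rfl⟩
  have hεw : extZ ξg (nz (wt w)) ν * εm (wordProd F w) = εm (wordProd F w) := by
    cases w using FreeMonoid.casesOn with
    | one => simp [nz_wt_one]
    | of_mul i w => simp [wordProd_of_mul, hεmF]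
  have heigen := apply_eq_smul_of_generators (z := K' τ₁ * wordProd F w * J' τ₂) hρanti hρ1
    hJ0 hJadd (s := fun ν => extZ ξg τ₁ ν * extZ ξg (nz (wt w)) ν) (by simp)
    (fun a b => by simp only [extZ_add_right hξ]; ring)
    (fun i => by rw [hρJ, hcJ]) (fun i => by rw [hρJinv, hcJ]) ν
  simp only [LinearMap.comp_apply, LinearMap.mulLeftRight_apply, heigen, map_smul, map_mul,
    hεmK', hεmJ', one_mul, mul_one, smul_eq_mul, LinearMap.smul_apply, AlgHom.toLinearMap_apply]
  rw [mul_assoc, hεw]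

theorem rho_E_mul_mulLeftRight (hK'0 : K' 0 = 1) (hJ'0 : J' 0 = 1)
    (hcK : ∀ (ν τ₁ τ₂ : I →₀ ℤ) (w : FreeMonoid I),
      cK ν (K' τ₁ * wordProd F w * J' τ₂)
        = (ang cd v βg ξg ν τ₁ * ang cd v βg ξg ν (nz (wt w))) • (K' τ₁ * wordProd F w * J' τ₂))
    (hcJ : ∀ (ν τ₁ τ₂ : I →₀ ℤ) (w : FreeMonoid I),
      cJ ν (K' τ₁ * wordProd F w * J' τ₂)
        = (extZ ξg τ₁ ν * extZ ξg (nz (wt w)) ν) • (K' τ₁ * wordProd F w * J' τ₂))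
    {iS : I → (Am →ₗ[𝔽] Am)} (hiS0 : ∀ (j : I) (τ₁ τ₂ : I →₀ ℤ), iS j (K' τ₁ * J' τ₂) = 0)
    (hiSmul : ∀ (j : I) (x y : Am), iS j (x * y) = iS j x * cJ (δZ j) y + cK (δZ j) x * iS j y)
    {E : I → Ap} (hρE : ∀ j : I, ρ (E j) = (v ^ (-(cd.d j)) - v ^ (cd.d j))⁻¹ • iS j)
    (j : I) (τ₁ τ₂ : I →₀ ℤ) :
    ρ (E j) * LinearMap.mulLeftRight 𝔽 (K' τ₁, J' τ₂)
      = ang cd v βg ξg (δZ j) τ₁ • (LinearMap.mulLeftRight 𝔽 (K' τ₁, J' τ₂) * ρ (E j)) := by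
  ext z
  simp only [hρE, Module.End.mul_apply, LinearMap.smul_apply, LinearMap.mulLeftRight_apply,
    iS_K'_mul_mul_J' hK'0 hJ'0 hcK hcJ hiS0 hiSmul, smul_mul_assoc, mul_smul_comm]
  exact smul_comm _ _ _

end Pairing

theorem phi_toral_factor_general
    {I : Type} [DecidableEq I] (cd : CartanDatum I)
    {𝔽 : Type} [Field 𝔽] [CharZero 𝔽] (v : 𝔽) (hv : Transcendental ℚ v)
    (βg ξg : I → I → 𝔽)
    (hββ : ∀ i j, βg i j * βg j i = 1) (hξne : ∀ i j, ξg i j ≠ 0)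
    {Ap : Type} [Ring Ap] [Algebra 𝔽 Ap]
    (E : I → Ap) (K Jp : (I →₀ ℤ) → Ap)
    (hK0 : K 0 = 1) (hKadd : ∀ a b, K (a + b) = K a * K b)
    (hJ0 : Jp 0 = 1) (hJadd : ∀ a b, Jp (a + b) = Jp a * Jp b)
    {Am : Type} [Ring Am] [Algebra 𝔽 Am]
    (F : I → Am) (K' J' : (I →₀ ℤ) → Am)
    (hK'0 : K' 0 = 1) (hJ'0 : J' 0 = 1)
    (cK cJ : (I →₀ ℤ) → (Am →ₗ[𝔽] Am))
    (hcK : ∀ (ν τ₁ τ₂ : I →₀ ℤ) (w : FreeMonoid I),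
      cK ν (K' τ₁ * wordProd F w * J' τ₂)
        = (ang cd v βg ξg ν τ₁ * ang cd v βg ξg ν (nz (wt w))) • (K' τ₁ * wordProd F w * J' τ₂))
    (hcJ : ∀ (ν τ₁ τ₂ : I →₀ ℤ) (w : FreeMonoid I),
      cJ ν (K' τ₁ * wordProd F w * J' τ₂)
        = (extZ ξg τ₁ ν * extZ ξg (nz (wt w)) ν) • (K' τ₁ * wordProd F w * J' τ₂))
    (iS : I → (Am →ₗ[𝔽] Am))
    (hiS0 : ∀ (j : I) (τ₁ τ₂ : I →₀ ℤ), iS j (K' τ₁ * J' τ₂) = 0)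
    (hiSF : ∀ j i : I, iS j (F i) = if i = j then ξg i j • (1 : Am) else 0)
    (hiSmul : ∀ (j : I) (x y : Am), iS j (x * y) = iS j x * cJ (δZ j) y + cK (δZ j) x * iS j y)
    (ρ : Ap →ₗ[𝔽] Module.End 𝔽 Am)
    (hρanti : ∀ x y : Ap, ρ (x * y) = ρ y * ρ x) (hρ1 : ρ 1 = 1)
    (hρE : ∀ j : I, ρ (E j) = (v ^ (-(cd.d j)) - v ^ (cd.d j))⁻¹ • iS j)
    (hρK : ∀ i : I, ρ (K (δZ i)) = cK (δZ i))
    (hρKinv : ∀ i : I, ρ (K (-(δZ i))) = cK (-(δZ i)))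
    (hρJ : ∀ i : I, ρ (Jp (δZ i)) = cJ (δZ i))
    (hρJinv : ∀ i : I, ρ (Jp (-(δZ i))) = cJ (-(δZ i)))
    (εm : Am →ₐ[𝔽] 𝔽)
    (hεmF : ∀ i, εm (F i) = 0) (hεmK' : ∀ ν, εm (K' ν) = 1) (hεmJ' : ∀ ν, εm (J' ν) = 1)
    :
    ∀ (ν₁ ν₂ τ₁ τ₂ : I →₀ ℤ) (μx μy : I →₀ ℕ) (x : Ap) (y : Am),
      HomogIn 𝔽 E μx x → HomogIn 𝔽 F μy y →
      εm (ρ (K ν₁ * x * Jp ν₂) (K' τ₁ * y * J' τ₂))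
        = ang cd v βg ξg ν₁ τ₁ * ang cd v βg ξg ν₁ (nz μy)
            * ang cd v βg ξg (nz μx) τ₁ * extZ ξg τ₁ ν₂ * εm (ρ x y) := by
  intro ν₁ ν₂ τ₁ τ₂ μx μy x y hx hy
  have hv0 : v ≠ 0 := fun h => hv (h ▸ isAlgebraic_zero)
  have hβ : ∀ i j, βg i j ≠ 0 := fun i j => left_ne_zero_of_mul_eq_one (hββ i j)
  have hE : ∀ j, wordSpan 𝔽 F ≤ (wordSpan 𝔽 F).comap (ρ (E j)) := fun j => by
    rw [hρE]
    exact (wordSpan_le_comap_iS hK'0 hJ'0 hcK hcJ hiS0 hiSF hiSmul j).trans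
      (Submodule.comap_le_comap_smul _ _ _)
  have hxy : ρ x y ∈ wordSpan 𝔽 F :=
    le_comap_of_mem_wordSpan hρanti hρ1 hE hx.mem_wordSpan hy.mem_wordSpan
  have hxL := LinearMap.congr_fun (mul_eq_smul_mul_of_homogIn hρanti hρ1
    (χ := (ang cd v βg ξg · τ₁)) (by simp [ang])
    (ang_add_left cd hv0 hβ hξne · · τ₁)
    (rho_E_mul_mulLeftRight hK'0 hJ'0 hcK hcJ hiS0 hiSmul hρE · τ₁ τ₂) hx) y
  simp only [Module.End.mul_apply, LinearMap.smul_apply, LinearMap.mulLeftRight_apply] at hxL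
  rw [hρanti, hρanti, Module.End.mul_apply, Module.End.mul_apply,
    rho_apply_K'_mul_mul_J'_of_homogIn hv0 hβ hξne hρanti hρ1 hK0 hKadd hcK hρK hρKinv ν₁ τ₁ τ₂ hy]
  simp only [map_smul, hxL, smul_eq_mul,
    counit_rho_apply_K'_mul_mul_J' hξne hρanti hρ1 hJ0 hJadd hcJ hρJ hρJinv hεmF hεmK' hεmJ'
      ν₂ τ₁ τ₂ hxy]
  ring

theorem phi_toral_factor
    {I : Type} [Fintype I] [DecidableEq I] (cd : CartanDatum I)
    {𝔽 : Type} [Field 𝔽] [CharZero 𝔽] (v : 𝔽) (hv : Transcendental ℚ v)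
    (βg ξg : I → I → 𝔽)
    (hββ : ∀ i j, βg i j * βg j i = 1) (hβii : ∀ i, βg i i = 1)
    (hξsymm : ∀ i j, ξg i j = ξg j i) (hξne : ∀ i j, ξg i j ≠ 0)
    {Ap : Type} [Ring Ap] [Algebra 𝔽 Ap]
    (E : I → Ap) (K Jp : (I →₀ ℤ) → Ap)
    (hK0 : K 0 = 1) (hKadd : ∀ a b, K (a + b) = K a * K b)
    (hJ0 : Jp 0 = 1) (hJadd : ∀ a b, Jp (a + b) = Jp a * Jp b)
    (hKJ : ∀ a b, K a * Jp b = Jp b * K a)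
    (hKE : ∀ i j : I, K (δZ i) * E j = ang cd v βg ξg (δZ i) (δZ j) • (E j * K (δZ i)))
    (hJE : ∀ i j : I, Jp (δZ i) * E j = ξg j i • (E j * Jp (δZ i)))
    (bp : Module.Basis ((I →₀ ℤ) × FreeMonoid I × (I →₀ ℤ)) 𝔽 Ap)
    (hbp : ∀ p, bp p = K p.1 * wordProd E p.2.1 * Jp p.2.2)
    {Am : Type} [Ring Am] [Algebra 𝔽 Am]
    (F : I → Am) (K' J' : (I →₀ ℤ) → Am)
    (hK'0 : K' 0 = 1) (hK'add : ∀ a b, K' (a + b) = K' a * K' b)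
    (hJ'0 : J' 0 = 1) (hJ'add : ∀ a b, J' (a + b) = J' a * J' b)
    (hK'J' : ∀ a b, K' a * J' b = J' b * K' a)
    (hK'F : ∀ i j : I, K' (δZ i) * F j
      = (ang cd v βg ξg (δZ j) (δZ i) * (ξg i j)⁻¹) • (F j * K' (δZ i)))
    (hJ'F : ∀ i j : I, J' (δZ i) * F j = F j * J' (δZ i))
    (bm : Module.Basis ((I →₀ ℤ) × FreeMonoid I × (I →₀ ℤ)) 𝔽 Am)
    (hbm : ∀ p, bm p = K' p.1 * wordProd F p.2.1 * J' p.2.2)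
    (cK cJ : (I →₀ ℤ) → (Am →ₗ[𝔽] Am))
    (hcK : ∀ (ν τ₁ τ₂ : I →₀ ℤ) (w : FreeMonoid I),
      cK ν (K' τ₁ * wordProd F w * J' τ₂)
        = (ang cd v βg ξg ν τ₁ * ang cd v βg ξg ν (nz (wt w))) • (K' τ₁ * wordProd F w * J' τ₂))
    (hcJ : ∀ (ν τ₁ τ₂ : I →₀ ℤ) (w : FreeMonoid I),
      cJ ν (K' τ₁ * wordProd F w * J' τ₂)
        = (extZ ξg τ₁ ν * extZ ξg (nz (wt w)) ν) • (K' τ₁ * wordProd F w * J' τ₂))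
    (iS : I → (Am →ₗ[𝔽] Am))
    (hiS0 : ∀ (j : I) (τ₁ τ₂ : I →₀ ℤ), iS j (K' τ₁ * J' τ₂) = 0)
    (hiSF : ∀ j i : I, iS j (F i) = if i = j then ξg i j • (1 : Am) else 0)
    (hiSmul : ∀ (j : I) (x y : Am), iS j (x * y) = iS j x * cJ (δZ j) y + cK (δZ j) x * iS j y)
    (ρ : Ap →ₗ[𝔽] Module.End 𝔽 Am)
    (hρanti : ∀ x y : Ap, ρ (x * y) = ρ y * ρ x) (hρ1 : ρ 1 = 1)
    (hρE : ∀ j : I, ρ (E j) = (v ^ (-(cd.d j)) - v ^ (cd.d j))⁻¹ • iS j)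
    (hρK : ∀ i : I, ρ (K (δZ i)) = cK (δZ i))
    (hρKinv : ∀ i : I, ρ (K (-(δZ i))) = cK (-(δZ i)))
    (hρJ : ∀ i : I, ρ (Jp (δZ i)) = cJ (δZ i))
    (hρJinv : ∀ i : I, ρ (Jp (-(δZ i))) = cJ (-(δZ i)))
    (εm : Am →ₐ[𝔽] 𝔽)
    (hεmF : ∀ i, εm (F i) = 0) (hεmK' : ∀ ν, εm (K' ν) = 1) (hεmJ' : ∀ ν, εm (J' ν) = 1)
    :
    ∀ (ν₁ ν₂ τ₁ τ₂ : I →₀ ℤ) (μx μy : I →₀ ℕ) (x : Ap) (y : Am),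
      HomogIn 𝔽 E μx x → HomogIn 𝔽 F μy y →
      εm (ρ (K ν₁ * x * Jp ν₂) (K' τ₁ * y * J' τ₂))
        = ang cd v βg ξg ν₁ τ₁ * ang cd v βg ξg ν₁ (nz μy)
            * ang cd v βg ξg (nz μx) τ₁ * extZ ξg τ₁ ν₂ * εm (ρ x y) :=
  phi_toral_factor_general cd v hv βg ξg hββ hξne E K Jp hK0 hKadd hJ0 hJadd F K' J' hK'0 hJ'0 cK cJ
    hcK hcJ iS hiS0 hiSF hiSmul ρ hρanti hρ1 hρE hρK hρKinv hρJ hρJinv εm hεmF hεmK' hεmJ'
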